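/- For a 𝒯-functor f: X → Y the following are equivalent: (i) f is dense; (ii) f⁺: X⁺ → Y⁺ is left adjoint; (iii) f⁺ is dense. If moreover X and Y are inhabited-cocomplete and f is inhabited-cocontinuous, these are also equivalent to: (iv) f is left adjoint. -/

import Mathlib

universe u

namespace Paper

/-- A strict topological theory `𝒯 = (𝕋, V, ξ)`: a commutative unital quantale `V`
(a complete lattice with a commutative monoid structure whose multiplication preserves
suprema in each variable, with `⊥ < k`), a `Set`-monad `𝕋 = (T, e, m)` such that `T`
sends pullbacks to weak pullbacks and the naturality squares of `m` are weak pullbacks,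
and a `𝕋`-algebra structure `ξ : T V → V` for which `⊗` and `k` are `𝕋`-algebra
homomorphisms and `ξ_X := ξ ∘ T(-)` is a (monotone) natural transformation
`P_V → P_V T`. -/
structure TopTheory (V : Type u) [CompleteLattice V] (T : Type u → Type u) where
  tens : V → V → V
  unit : V
  tens_comm : ∀ u v : V, tens u v = tens v u
  tens_assoc : ∀ u v w : V, tens (tens u v) w = tens u (tens v w)
  unit_tens : ∀ v : V, tens unit v = v
  tens_sSup : ∀ (u : V) (S : Set V), tens u (sSup S) = ⨆ v ∈ S, tens u v
  bot_lt_unit : (⊥ : V) < unit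
  map : ∀ {X Y : Type u}, (X → Y) → T X → T Y
  map_id : ∀ {X : Type u}, map (id : X → X) = id
  map_comp : ∀ {X Y Z : Type u} (g : Y → Z) (f : X → Y) (𝔵 : T X),
    map (g ∘ f) 𝔵 = map g (map f 𝔵)
  e : ∀ {X : Type u}, X → T X
  m : ∀ {X : Type u}, T (T X) → T X
  e_nat : ∀ {X Y : Type u} (f : X → Y) (x : X), map f (e x) = e (f x)
  m_nat : ∀ {X Y : Type u} (f : X → Y) (𝔛 : T (T X)), map f (m 𝔛) = m (map (map f) 𝔛)
  m_e : ∀ {X : Type u} (𝔵 : T X), m (e 𝔵) = 𝔵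
  m_map_e : ∀ {X : Type u} (𝔵 : T X), m (map e 𝔵) = 𝔵
  m_assoc : ∀ {X : Type u} (𝔜 : T (T (T X))), m (m 𝔜) = m (map m 𝔜)
  /-- (BC): `T` sends pullbacks to weak pullbacks. -/
  map_bc : ∀ {X Y Z : Type u} (f : X → Z) (g : Y → Z) (𝔵 : T X) (𝔶 : T Y),
    map f 𝔵 = map g 𝔶 →
    ∃ 𝔴 : T {p : X × Y // f p.1 = g p.2},
      map (fun p => p.1.1) 𝔴 = 𝔵 ∧ map (fun p => p.1.2) 𝔴 = 𝔶
  /-- (BC): every naturality square of `m` is a weak pullback. -/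
  m_bc : ∀ {X Y : Type u} (f : X → Y) (𝔜 : T (T Y)) (𝔵 : T X),
    m 𝔜 = map f 𝔵 → ∃ 𝔛 : T (T X), map (map f) 𝔛 = 𝔜 ∧ m 𝔛 = 𝔵
  xi : T V → V
  xi_e : ∀ v : V, xi (e v) = v
  xi_m : ∀ 𝔙 : T (T V), xi (m 𝔙) = xi (map xi 𝔙)
  /-- `k : 1 → V` is a `𝕋`-algebra homomorphism. -/
  xi_unit : ∀ {X : Type u} (𝔵 : T X), xi (map (fun _ => unit) 𝔵) = unit
  /-- `⊗ : V × V → V` is a `𝕋`-algebra homomorphism. -/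
  xi_tens : ∀ 𝔴 : T (V × V),
    xi (map (fun p => tens p.1 p.2) 𝔴) = tens (xi (map Prod.fst 𝔴)) (xi (map Prod.snd 𝔴))
  /-- each component `ξ_X : V^X → V^{T X}` is monotone. -/
  xi_mono : ∀ {X : Type u} (φ φ' : X → V), (∀ x, φ x ≤ φ' x) →
    ∀ 𝔵 : T X, xi (map φ 𝔵) ≤ xi (map φ' 𝔵)
  /-- `ξ_X` is a natural transformation `P_V → P_V T`. -/
  xi_nat : ∀ {X Y : Type u} (f : X → Y) (φ : X → V) (𝔶 : T Y),
    (⨆ 𝔵 : {𝔵 : T X // map f 𝔵 = 𝔶}, xi (map φ 𝔵.1)) =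
      xi (map (fun y => ⨆ x : {x : X // f x = y}, φ x.1) 𝔶)

namespace TopTheory

variable {V : Type u} [CompleteLattice V] {T : Type u → Type u}

/-- The internal hom of the quantale: `u ⊗ (-) ⊣ hom (u, -)`. -/
def ihom (𝒯 : TopTheory V T) (u w : V) : V := sSup {z | 𝒯.tens u z ≤ w}

/-- The extension `T_ξ` of `T : Set → Set` to `V`-relations. -/
def Txi (𝒯 : TopTheory V T) {X Y : Type u} (r : X → Y → V) (𝔵 : T X) (𝔶 : T Y) : V :=
  ⨆ 𝔴 : {w : T (X × Y) // 𝒯.map Prod.fst w = 𝔵 ∧ 𝒯.map Prod.snd w = 𝔶},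
    𝒯.xi (𝒯.map (fun p => r p.1 p.2) 𝔴.1)

/-- Kleisli convolution `β ∘ α = β · T_ξ α · m_X°` of `𝒯`-relations
`α : X ⇸ Y` and `β : Y ⇸ Z`. -/
def kleisli (𝒯 : TopTheory V T) {X Y Z : Type u}
    (β : T Y → Z → V) (α : T X → Y → V) (𝔵 : T X) (z : Z) : V :=
  ⨆ 𝔛 : {𝔛 : T (T X) // 𝒯.m 𝔛 = 𝔵}, ⨆ 𝔶 : T Y, 𝒯.tens (𝒯.Txi α 𝔛.1 𝔶) (β 𝔶 z)

/-- The `𝒯`-relation `e_X° : X ⇸ X`. -/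
def unitRel (𝒯 : TopTheory V T) (X : Type u) (𝔵 : T X) (x : X) : V :=
  ⨆ _ : 𝔵 = 𝒯.e x, 𝒯.unit

/-- A `𝒯`-category structure on `X`: a `𝒯`-relation `a : X ⇸ X` with
`e_X° ≤ a` and `a ∘ a ≤ a`. -/
structure TCatStr (𝒯 : TopTheory V T) (X : Type u) where
  rel : T X → X → V
  le_refl : ∀ x : X, 𝒯.unit ≤ rel (𝒯.e x) x
  comp : ∀ (𝔵 : T X) (x : X), 𝒯.kleisli rel rel 𝔵 x ≤ rel 𝔵 x

/-- The `𝒯`-module conditions `φ ∘ a ≤ φ` and `b ∘ φ ≤ φ` for a `𝒯`-relation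
`φ : X ⇸ Y` between (structures underlying) `𝒯`-categories `(X,a)` and `(Y,b)`. -/
def IsTModRel (𝒯 : TopTheory V T) {X Y : Type u}
    (a : T X → X → V) (b : T Y → Y → V) (φ : T X → Y → V) : Prop :=
  (∀ 𝔵 y, 𝒯.kleisli φ a 𝔵 y ≤ φ 𝔵 y) ∧ (∀ 𝔵 y, 𝒯.kleisli b φ 𝔵 y ≤ φ 𝔵 y)

variable {𝒯 : TopTheory V T}

/-- `f_* = b · T f`. -/
def modStar {X Y : Type u} (b : 𝒯.TCatStr Y) (f : X → Y) (𝔵 : T X) (y : Y) : V :=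
  b.rel (𝒯.map f 𝔵) y

/-- `f^* = f° · b`. -/
def modCostar {X Y : Type u} (b : 𝒯.TCatStr Y) (f : X → Y) (𝔶 : T Y) (x : X) : V :=
  b.rel 𝔶 (f x)

/-- The extension `φ ⟜ ψ` of `φ : X ⇸∘ Y` along `ψ : X ⇸∘ Z`, given by
`(φ ⟜ ψ)(𝔷,y) = ⋀_{𝔵 ∈ T X} hom((T_ξ ψ · m_X°)(𝔵,𝔷), φ(𝔵,y))`. -/
def extend (𝒯 : TopTheory V T) {X Y Z : Type u}
    (φ : T X → Y → V) (ψ : T X → Z → V) (𝔷 : T Z) (y : Y) : V :=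
  ⨅ 𝔵 : T X, 𝒯.ihom (⨆ 𝔛 : {𝔛 : T (T X) // 𝒯.m 𝔛 = 𝔵}, 𝒯.Txi ψ 𝔛.1 𝔷) (φ 𝔵 y)

/-- A `𝒯`-functor `f : (X,a) → (Y,b)`. -/
def IsTFunctor {X Y : Type u} (a : 𝒯.TCatStr X) (b : 𝒯.TCatStr Y) (f : X → Y) : Prop :=
  ∀ (𝔵 : T X) (x : X), a.rel 𝔵 x ≤ b.rel (𝒯.map f 𝔵) (f x)

/-- A fully faithful `𝒯`-functor. -/
def FullyFaithful {X Y : Type u} (a : 𝒯.TCatStr X) (b : 𝒯.TCatStr Y) (f : X → Y) : Prop :=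
  ∀ (𝔵 : T X) (x : X), a.rel 𝔵 x = b.rel (𝒯.map f 𝔵) (f x)

/-- The order `f ≤ g ⟺ f^* ≤ g^*` on `𝒯`-functors `X → (Y,b)`. -/
def funLE {X Y : Type u} (b : 𝒯.TCatStr Y) (f g : X → Y) : Prop :=
  ∀ (𝔶 : T Y) (x : X), b.rel 𝔶 (f x) ≤ b.rel 𝔶 (g x)

/-- Equivalence `f ≅ g ⟺ f^* = g^*` of `𝒯`-functors `X → (Y,b)`. -/
def FunEquiv {X Y : Type u} (b : 𝒯.TCatStr Y) (f g : X → Y) : Prop :=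
  ∀ (𝔶 : T Y) (x : X), b.rel 𝔶 (f x) = b.rel 𝔶 (g x)

/-- `f ⊣ g`:  `1_X ≤ g·f` and `f·g ≤ 1_Y`. -/
def IsAdjunction {X Y : Type u} (a : 𝒯.TCatStr X) (b : 𝒯.TCatStr Y)
    (f : X → Y) (g : Y → X) : Prop :=
  (∀ (𝔵 : T X) (x : X), a.rel 𝔵 x ≤ a.rel 𝔵 (g (f x))) ∧
    (∀ (𝔶 : T Y) (y : Y), b.rel 𝔶 (f (g y)) ≤ b.rel 𝔶 y)

/-- A left adjoint `𝒯`-functor. -/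
def IsLeftAdjoint {X Y : Type u} (a : 𝒯.TCatStr X) (b : 𝒯.TCatStr Y) (f : X → Y) : Prop :=
  IsTFunctor a b f ∧ ∃ g : Y → X, IsTFunctor b a g ∧ IsAdjunction a b f g

/-- L-separatedness: equivalent `𝒯`-functors into `X` are equal. -/
def Separated {X : Type u} (a : 𝒯.TCatStr X) : Prop :=
  ∀ (A : Type u) (as : 𝒯.TCatStr A) (f g : A → X),
    IsTFunctor as a f → IsTFunctor as a g → FunEquiv a f g → f = g

/-- Injectivity with respect to fully faithful `𝒯`-functors. -/
def Injective {X : Type u} (a : 𝒯.TCatStr X) : Prop :=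
  ∀ (A B : Type u) (as : 𝒯.TCatStr A) (bs : 𝒯.TCatStr B) (f : A → X) (i : A → B),
    IsTFunctor as a f → IsTFunctor as bs i → FullyFaithful as bs i →
      ∃ g : B → X, IsTFunctor bs a g ∧ FunEquiv a (g ∘ i) f

/-- `g : Z → X` is the `ψ`-weighted colimit of `h : A → X`, i.e. `g_* = h_* ⟜ ψ`. -/
def IsColimit {X A Z : Type u} (a : 𝒯.TCatStr X) (h : A → X) (ψ : T A → Z → V)
    (g : Z → X) : Prop :=
  ∀ (𝔷 : T Z) (x : X), modStar a g 𝔷 x = 𝒯.extend (modStar a h) ψ 𝔷 x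

/-- Cocompleteness: every weighted diagram has a colimit. -/
def Cocomplete {X : Type u} (a : 𝒯.TCatStr X) : Prop :=
  ∀ (A Z : Type u) (as : 𝒯.TCatStr A) (cs : 𝒯.TCatStr Z) (h : A → X),
    IsTFunctor as a h → ∀ ψ : T A → Z → V, 𝒯.IsTModRel as.rel cs.rel ψ →
      ∃ g : Z → X, IsTFunctor cs a g ∧ IsColimit a h ψ g

/-- Cocontinuity: preservation of all weighted colimits. -/
def Cocontinuous {X Y : Type u} (a : 𝒯.TCatStr X) (b : 𝒯.TCatStr Y) (f : X → Y) : Prop :=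
  ∀ (A Z : Type u) (as : 𝒯.TCatStr A) (cs : 𝒯.TCatStr Z) (h : A → X)
    (ψ : T A → Z → V) (g : Z → X),
    IsTFunctor as a h → 𝒯.IsTModRel as.rel cs.rel ψ → IsTFunctor cs a g →
      IsColimit a h ψ g → IsColimit b (f ∘ h) ψ (f ∘ g)

/-- A presheaf on `(X,a)`: a `𝒯`-module `X ⇸∘ G`, where `G = (1, e_1°)`. -/
def IsPresheaf {X : Type u} (a : 𝒯.TCatStr X) (ψ : T X → V) : Prop :=
  𝒯.IsTModRel a.rel (𝒯.unitRel PUnit) (fun 𝔵 _ => ψ 𝔵)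

/-- The underlying set of the presheaf `𝒯`-category `X̂`. -/
def Hat {X : Type u} (a : 𝒯.TCatStr X) : Type u := {ψ : T X → V // IsPresheaf a ψ}

/-- The `𝒯`-category structure `⟦-,-⟧` of `V^{|X|}`. -/
def powRel (𝒯 : TopTheory V T) (X : Type u) (𝔭 : T (T X → V)) (ψ : T X → V) : V :=
  ⨅ 𝔮 : {q : T ((T X) × (T X → V)) // 𝒯.map Prod.snd q = 𝔭},
    𝒯.ihom (𝒯.xi (𝒯.map (fun p => p.2 p.1) 𝔮.1)) (ψ (𝒯.m (𝒯.map Prod.fst 𝔮.1)))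

/-- `hs` is the `𝒯`-category structure on `X̂` inherited from `V^{|X|}`. -/
def IsHatStr {X : Type u} (a : 𝒯.TCatStr X) (hs : 𝒯.TCatStr (Hat a)) : Prop :=
  ∀ (𝔭 : T (Hat a)) (ψ : Hat a), hs.rel 𝔭 ψ = 𝒯.powRel X (𝒯.map Subtype.val 𝔭) ψ.1

/-- `y` is the Yoneda functor `X → X̂`, `y x = a(-,x)`. -/
def IsYoneda {X : Type u} (a : 𝒯.TCatStr X) (y : X → Hat a) : Prop :=
  ∀ (x : X) (𝔵 : T X), (y x).1 𝔵 = a.rel 𝔵 x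

/-- The underlying map `ψ ↦ ψ ∘ f^*` of `f̂ : X̂ → Ŷ`. -/
def hatMapRel {X Y : Type u} (b : 𝒯.TCatStr Y) (f : X → Y) (ψ : T X → V) (𝔶 : T Y) : V :=
  𝒯.kleisli (fun 𝔵 (_ : PUnit.{u + 1}) => ψ 𝔵) (modCostar b f) 𝔶 PUnit.unit

/-- `fh` is the `𝒯`-functor `f̂ : X̂ → Ŷ`, with underlying map `ψ ↦ ψ ∘ f^*`. -/
def IsHatMap {X Y : Type u} (a : 𝒯.TCatStr X) (b : 𝒯.TCatStr Y) (f : X → Y)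
    (fh : Hat a → Hat b) : Prop :=
  ∀ (ψ : Hat a) (𝔶 : T Y), (fh ψ).1 𝔶 = hatMapRel b f ψ.1 𝔶

/-- An inhabited `𝒯`-module: `k ≤ ⋀_y ⋁_𝔵 φ(𝔵,y)`. -/
def InhabitedMod (𝒯 : TopTheory V T) {X Y : Type u} (φ : T X → Y → V) : Prop :=
  𝒯.unit ≤ ⨅ y : Y, ⨆ 𝔵 : T X, φ 𝔵 y

/-- A dense `𝒯`-functor: `f_*` is inhabited. -/
def Dense {X Y : Type u} (b : 𝒯.TCatStr Y) (f : X → Y) : Prop :=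
  𝒯.InhabitedMod (modStar b f)

/-- The underlying set of `X⁺ = {ψ ∈ X̂ ∣ ψ inhabited}`. -/
def Plus {X : Type u} (a : 𝒯.TCatStr X) : Type u :=
  {ψ : Hat a // 𝒯.InhabitedMod (fun 𝔵 (_ : PUnit.{u + 1}) => ψ.1 𝔵)}

/-- `ps` is the `𝒯`-category structure on `X⁺` inherited from `X̂`. -/
def IsPlusStr {X : Type u} (a : 𝒯.TCatStr X) (hs : 𝒯.TCatStr (Hat a))
    (ps : 𝒯.TCatStr (Plus a)) : Prop :=
  ∀ (𝔭 : T (Plus a)) (ψ : Plus a), ps.rel 𝔭 ψ = hs.rel (𝒯.map Subtype.val 𝔭) ψ.1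

/-- Inhabited-cocompleteness: all colimits with inhabited weights exist. -/
def ICocomplete {X : Type u} (a : 𝒯.TCatStr X) : Prop :=
  ∀ (A Z : Type u) (as : 𝒯.TCatStr A) (cs : 𝒯.TCatStr Z) (h : A → X),
    IsTFunctor as a h → ∀ ψ : T A → Z → V, 𝒯.IsTModRel as.rel cs.rel ψ →
      𝒯.InhabitedMod ψ → ∃ g : Z → X, IsTFunctor cs a g ∧ IsColimit a h ψ g

/-- Inhabited-cocontinuity: preservation of all colimits with inhabited weights. -/
def ICocontinuous {X Y : Type u} (a : 𝒯.TCatStr X) (b : 𝒯.TCatStr Y) (f : X → Y) : Prop :=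
  ∀ (A Z : Type u) (as : 𝒯.TCatStr A) (cs : 𝒯.TCatStr Z) (h : A → X)
    (ψ : T A → Z → V) (g : Z → X),
    IsTFunctor as a h → 𝒯.IsTModRel as.rel cs.rel ψ → 𝒯.InhabitedMod ψ →
      IsTFunctor cs a g → IsColimit a h ψ g → IsColimit b (f ∘ h) ψ (f ∘ g)

/-!
The restriction `f⁺` of `f̂` is always a `𝒯`-functor. If `f` is dense, then pulling back along
`f` preserves inhabited presheaves, so `f⁻¹ : Ŷ → X̂` restricts to `Y⁺ → X⁺`, and the unit
`ψ ≤ f⁻¹ f̂ ψ` and counit `f̂ f⁻¹ ψ ≤ ψ` make it right adjoint to `f⁺`. A left adjoint `u ⊣ v`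
is dense, witnessed at `e (v y)`. If `f⁺` is dense, testing its density at the representable
presheaf `b(-, y) ∈ Y⁺` and using that every member of `X⁺` is inhabited bounds `k` by
`⋁_𝔵 b(Tf 𝔵, y)`, so `f` is dense. Finally, when `f` is dense, `f_*` is an inhabited weight, so
`g = colim(f_*, 1_X)` exists; the colimit property gives `1 ≤ g f`, and cocontinuity identifies
`f g` with `colim(f_*, f)`, whence `(f g)_* = f_* ⟜ f_* ≥ 1`, i.e. `f g ≤ 1`.
-/

lemma tens_mono_right {v w : V} (h : v ≤ w) (u : V) : 𝒯.tens u v ≤ 𝒯.tens u w := by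
  have h2 := 𝒯.tens_sSup u {v, w}
  rw [sSup_pair, sup_eq_right.mpr h] at h2
  rw [h2]
  exact le_iSup₂ (f := fun x (_ : x ∈ ({v, w} : Set V)) => 𝒯.tens u x) v (by simp)

lemma tens_mono_left {v w : V} (h : v ≤ w) (u : V) : 𝒯.tens v u ≤ 𝒯.tens w u := by
  rw [𝒯.tens_comm v u, 𝒯.tens_comm w u]
  exact tens_mono_right h u

lemma tens_iSup {ι : Sort*} (u : V) (v : ι → V) :
    𝒯.tens u (⨆ i, v i) = ⨆ i, 𝒯.tens u (v i) := by
  rw [← sSup_range, 𝒯.tens_sSup, iSup_range]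

lemma iSup_tens {ι : Sort*} (v : ι → V) (u : V) :
    𝒯.tens (⨆ i, v i) u = ⨆ i, 𝒯.tens (v i) u := by
  rw [𝒯.tens_comm, tens_iSup]
  exact iSup_congr fun i => 𝒯.tens_comm u (v i)

lemma tens_unit (v : V) : 𝒯.tens v 𝒯.unit = v := by rw [𝒯.tens_comm, 𝒯.unit_tens]

lemma tens_le_iff_le_ihom {u v w : V} : 𝒯.tens u v ≤ w ↔ v ≤ 𝒯.ihom u w := by
  refine ⟨fun h => le_sSup h, fun h => (tens_mono_right h u).trans ?_⟩
  rw [ihom, 𝒯.tens_sSup]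
  exact iSup₂_le fun _ hz => hz

lemma ihom_mono (u : V) {w w' : V} (h : w ≤ w') : 𝒯.ihom u w ≤ 𝒯.ihom u w' :=
  tens_le_iff_le_ihom.mp ((tens_le_iff_le_ihom.mpr le_rfl).trans h)

lemma map_map {X Y Z : Type u} (f : X → Y) (g : Y → Z) (𝔵 : T X) :
    𝒯.map g (𝒯.map f 𝔵) = 𝒯.map (fun x => g (f x)) 𝔵 :=
  (𝒯.map_comp g f 𝔵).symm

lemma map_id_apply {X : Type u} (𝔵 : T X) : 𝒯.map id 𝔵 = 𝔵 := by rw [𝒯.map_id, id]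

lemma unit_le_xi_map {X : Type u} {φ : X → V} (h : ∀ x, 𝒯.unit ≤ φ x) (𝔵 : T X) :
    𝒯.unit ≤ 𝒯.xi (𝒯.map φ 𝔵) :=
  (𝒯.xi_unit 𝔵).symm.le.trans (𝒯.xi_mono _ _ h 𝔵)

lemma xi_map_tens {X : Type u} (φ ψ : X → V) (𝔵 : T X) :
    𝒯.xi (𝒯.map (fun x => 𝒯.tens (φ x) (ψ x)) 𝔵) =
      𝒯.tens (𝒯.xi (𝒯.map φ 𝔵)) (𝒯.xi (𝒯.map ψ 𝔵)) := by
  have h := 𝒯.xi_tens (𝒯.map (fun x => (φ x, ψ x)) 𝔵)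
  simpa only [map_map] using h

lemma xi_map_xi_map {X Z : Type u} (φ : X → V) (g : Z → T X) (𝔷 : T Z) :
    𝒯.xi (𝒯.map (fun z => 𝒯.xi (𝒯.map φ (g z))) 𝔷) = 𝒯.xi (𝒯.map φ (𝒯.m (𝒯.map g 𝔷))) := by
  rw [𝒯.m_nat, 𝒯.xi_m, map_map, map_map]

lemma xi_map_le_iSup_fiber {A S : Type u} (g : A → S) {F : A → V} {G : S → V}
    (h : ∀ s, G s ≤ ⨆ x : {x : A // g x = s}, F x.1) (𝔰 : T S) :
    𝒯.xi (𝒯.map G 𝔰) ≤ ⨆ 𝔱 : {𝔱 : T A // 𝒯.map g 𝔱 = 𝔰}, 𝒯.xi (𝒯.map F 𝔱.1) :=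
  (𝒯.xi_mono _ _ h 𝔰).trans (𝒯.xi_nat g F 𝔰).ge

lemma exists_map_snd_eq {A B C : Type u} (𝔮 : T (B × C)) (g : A → C) (𝔭 : T A)
    (h : 𝒯.map Prod.snd 𝔮 = 𝒯.map g 𝔭) :
    ∃ 𝔰 : T (B × A), 𝒯.map Prod.snd 𝔰 = 𝔭 ∧ 𝒯.map (fun s => (s.1, g s.2)) 𝔰 = 𝔮 := by
  obtain ⟨𝔴, h𝔮, h𝔭⟩ := 𝒯.map_bc Prod.snd g 𝔮 𝔭 h
  refine ⟨𝒯.map (fun w => (w.1.1.1, w.1.2)) 𝔴, by rw [map_map, h𝔭], ?_⟩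
  rw [map_map, ← h𝔮]
  exact congrArg (𝒯.map · 𝔴) (funext fun w => Prod.ext rfl w.2.symm)

lemma xi_map_le_Txi {R X Y : Type u} (r : X → Y → V) (u : R → X) (v : R → Y) (𝔯 : T R) :
    𝒯.xi (𝒯.map (fun q => r (u q) (v q)) 𝔯) ≤ 𝒯.Txi r (𝒯.map u 𝔯) (𝒯.map v 𝔯) := by
  refine le_trans (le_of_eq ?_) (le_iSup _ ⟨𝒯.map (fun q => (u q, v q)) 𝔯, map_map .., map_map ..⟩)
  rw [map_map]

lemma Txi_le_Txi_map {X Y X' Y' : Type u} {r : X → Y → V} {r' : X' → Y' → V}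
    (u : X → X') (v : Y → Y') (h : ∀ x y, r x y ≤ r' (u x) (v y)) (𝔵 : T X) (𝔶 : T Y) :
    𝒯.Txi r 𝔵 𝔶 ≤ 𝒯.Txi r' (𝒯.map u 𝔵) (𝒯.map v 𝔶) := by
  refine iSup_le fun ⟨𝔴, h𝔵, h𝔶⟩ => ?_
  subst h𝔵 h𝔶
  refine (𝒯.xi_mono _ _ (fun p => h p.1 p.2) 𝔴).trans ?_
  simpa only [map_map] using xi_map_le_Txi r' (fun p => u p.1) (fun p => v p.2) 𝔴

lemma le_Txi_e {X Y : Type u} (r : X → Y → V) (x : X) (y : Y) :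
    r x y ≤ 𝒯.Txi r (𝒯.e x) (𝒯.e y) := by
  simpa only [𝒯.e_nat, 𝒯.xi_e] using xi_map_le_Txi (𝒯 := 𝒯) r Prod.fst Prod.snd (𝒯.e (x, y))

lemma kleisli_le_iff {X Y Z : Type u} {β : T Y → Z → V} {α : T X → Y → V}
    {γ : T X → Z → V} :
    (∀ 𝔵 z, 𝒯.kleisli β α 𝔵 z ≤ γ 𝔵 z) ↔
      ∀ (𝔛 : T (T X)) 𝔶 z, 𝒯.tens (𝒯.Txi α 𝔛 𝔶) (β 𝔶 z) ≤ γ (𝒯.m 𝔛) z := by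
  simp only [kleisli, iSup_le_iff, Subtype.forall]
  exact ⟨fun h 𝔛 𝔶 z => h _ z 𝔛 rfl 𝔶, fun h _ z 𝔛 h𝔛 𝔶 => h𝔛 ▸ h 𝔛 𝔶 z⟩

lemma tens_unitRel {X : Type u} (v : V) (𝔭 : T X) (x : X) :
    𝒯.tens v (𝒯.unitRel X 𝔭 x) = ⨆ _ : 𝔭 = 𝒯.e x, v := by
  rw [unitRel, tens_iSup, tens_unit]

lemma TCatStr.tens_le {Y : Type u} (b : 𝒯.TCatStr Y) (𝔜 : T (T Y)) (𝔶 : T Y) (y : Y) :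
    𝒯.tens (𝒯.Txi b.rel 𝔜 𝔶) (b.rel 𝔶 y) ≤ b.rel (𝒯.m 𝔜) y :=
  kleisli_le_iff.mp b.comp 𝔜 𝔶 y

lemma TCatStr.rel_le_rel_of_unit_le {Y : Type u} (b : 𝒯.TCatStr Y) {z y : Y}
    (h : 𝒯.unit ≤ b.rel (𝒯.e z) y) (𝔶 : T Y) : b.rel 𝔶 z ≤ b.rel 𝔶 y :=
  calc b.rel 𝔶 z = 𝒯.tens (b.rel 𝔶 z) 𝒯.unit := (tens_unit _).symm
    _ ≤ 𝒯.tens (𝒯.Txi b.rel (𝒯.e 𝔶) (𝒯.e z)) (b.rel (𝒯.e z) y) :=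
      (tens_mono_right h _).trans (tens_mono_left (le_Txi_e b.rel 𝔶 z) _)
    _ ≤ b.rel 𝔶 y := by simpa only [𝒯.m_e] using b.tens_le (𝒯.e 𝔶) (𝒯.e z) y

lemma Txi_e_le_of_kleisli_le {X Y : Type u} (b : 𝒯.TCatStr Y) {φ : T X → Y → V}
    (h : ∀ 𝔵 y, 𝒯.kleisli b.rel φ 𝔵 y ≤ φ 𝔵 y) (𝔛 : T (T X)) (y : Y) :
    𝒯.Txi φ 𝔛 (𝒯.e y) ≤ φ (𝒯.m 𝔛) y :=
  calc 𝒯.Txi φ 𝔛 (𝒯.e y) = 𝒯.tens (𝒯.Txi φ 𝔛 (𝒯.e y)) 𝒯.unit := (tens_unit _).symm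
    _ ≤ 𝒯.tens (𝒯.Txi φ 𝔛 (𝒯.e y)) (b.rel (𝒯.e y) y) := tens_mono_right (b.le_refl y) _
    _ ≤ φ (𝒯.m 𝔛) y := kleisli_le_iff.mp h 𝔛 (𝒯.e y) y

lemma isPresheaf_iff {X : Type u} {a : 𝒯.TCatStr X} {ψ : T X → V} :
    IsPresheaf a ψ ↔
      (∀ (𝔛 : T (T X)) 𝔵, 𝒯.tens (𝒯.Txi a.rel 𝔛 𝔵) (ψ 𝔵) ≤ ψ (𝒯.m 𝔛)) ∧
        ∀ 𝔛 : T (T X), 𝒯.Txi (fun 𝔵 (_ : PUnit.{u + 1}) => ψ 𝔵) 𝔛 (𝒯.e PUnit.unit) ≤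
          ψ (𝒯.m 𝔛) := by
  simp only [IsPresheaf, IsTModRel, kleisli_le_iff, tens_unitRel, iSup_le_iff]
  refine and_congr ⟨fun h 𝔛 𝔵 => h 𝔛 𝔵 .unit, fun h 𝔛 𝔵 _ => h 𝔛 𝔵⟩
    ⟨fun h 𝔛 => h 𝔛 _ .unit rfl, fun h 𝔛 _ _ h𝔭 => h𝔭 ▸ h 𝔛⟩

lemma isPresheaf_comap {X Y : Type u} {a : 𝒯.TCatStr X} {b : 𝒯.TCatStr Y} {f : X → Y}
    (hf : IsTFunctor a b f) {ψ : T Y → V} (hψ : IsPresheaf b ψ) :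
    IsPresheaf a (fun 𝔵 => ψ (𝒯.map f 𝔵)) := by
  rw [isPresheaf_iff] at hψ ⊢
  refine ⟨fun 𝔛 𝔵 => ?_, fun 𝔛 => ?_⟩
  · refine (tens_mono_left (Txi_le_Txi_map (𝒯.map f) f hf 𝔛 𝔵) _).trans ?_
    simpa only [𝒯.m_nat] using hψ.1 (𝒯.map (𝒯.map f) 𝔛) (𝒯.map f 𝔵)
  · refine (Txi_le_Txi_map (r' := fun 𝔶 (_ : PUnit.{u + 1}) => ψ 𝔶) (𝒯.map f) id
      (fun _ _ => le_rfl) 𝔛 _).trans ?_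
    simpa only [map_id_apply, 𝒯.m_nat] using hψ.2 (𝒯.map (𝒯.map f) 𝔛)

lemma isPresheaf_rel {Y : Type u} (b : 𝒯.TCatStr Y) (y : Y) :
    IsPresheaf b (fun 𝔶 => b.rel 𝔶 y) := by
  refine isPresheaf_iff.mpr ⟨fun 𝔛 𝔶 => b.tens_le 𝔛 𝔶 y, fun 𝔛 => ?_⟩
  refine (Txi_le_Txi_map (r' := b.rel) id (fun _ => y) (fun _ _ => le_rfl) 𝔛 _).trans ?_
  simpa only [map_id_apply, 𝒯.e_nat] using Txi_e_le_of_kleisli_le b b.comp 𝔛 y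

lemma kleisli_modStar_le {X Y : Type u} {a : 𝒯.TCatStr X} {b : 𝒯.TCatStr Y} {f : X → Y}
    (hf : IsTFunctor a b f) : ∀ 𝔵 y, 𝒯.kleisli (modStar b f) a.rel 𝔵 y ≤ modStar b f 𝔵 y := by
  refine kleisli_le_iff.mpr fun 𝔛 𝔵 y => ?_
  refine (tens_mono_left (Txi_le_Txi_map (𝒯.map f) f hf 𝔛 𝔵) _).trans ?_
  simpa only [modStar, 𝒯.m_nat] using b.tens_le (𝒯.map (𝒯.map f) 𝔛) (𝒯.map f 𝔵) y

lemma kleisli_rel_modStar_le {X Y : Type u} (b : 𝒯.TCatStr Y) (f : X → Y) :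
    ∀ 𝔵 y, 𝒯.kleisli b.rel (modStar b f) 𝔵 y ≤ modStar b f 𝔵 y := by
  refine kleisli_le_iff.mpr fun 𝔛 𝔶 y => ?_
  refine (tens_mono_left (Txi_le_Txi_map (r' := b.rel) (𝒯.map f) id
    (fun _ _ => le_rfl) 𝔛 𝔶) _).trans ?_
  simpa only [modStar, map_id_apply, 𝒯.m_nat] using b.tens_le (𝒯.map (𝒯.map f) 𝔛) 𝔶 y

lemma tens_extend_le {X Y Z : Type u} (φ : T X → Y → V) (ψ : T X → Z → V) (𝔛 : T (T X))
    (𝔷 : T Z) (y : Y) :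
    𝒯.tens (𝒯.Txi ψ 𝔛 𝔷) (𝒯.extend φ ψ 𝔷 y) ≤ φ (𝒯.m 𝔛) y :=
  (tens_mono_left (le_iSup (fun 𝔛' : {𝔛' : T (T X) // 𝒯.m 𝔛' = 𝒯.m 𝔛} => 𝒯.Txi ψ 𝔛'.1 𝔷)
    ⟨𝔛, rfl⟩) _).trans (tens_le_iff_le_ihom.mpr (iInf_le _ (𝒯.m 𝔛)))

lemma unit_le_extend_self {X Y : Type u} (b : 𝒯.TCatStr Y) {φ : T X → Y → V}
    (h : ∀ 𝔵 y, 𝒯.kleisli b.rel φ 𝔵 y ≤ φ 𝔵 y) (y : Y) :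
    𝒯.unit ≤ 𝒯.extend φ φ (𝒯.e y) y := by
  refine le_iInf fun 𝔵 => tens_le_iff_le_ihom.mp ?_
  rw [tens_unit]
  exact iSup_le fun ⟨𝔛, h𝔛⟩ => h𝔛 ▸ Txi_e_le_of_kleisli_le b h 𝔛 y

lemma hatMapRel_eq {X Y : Type u} (b : 𝒯.TCatStr Y) (f : X → Y) (ψ : T X → V) (𝔶 : T Y) :
    hatMapRel b f ψ 𝔶 = ⨆ 𝔴 : {𝔴 : T (T Y × X) // 𝒯.m (𝒯.map Prod.fst 𝔴) = 𝔶},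
      𝒯.tens (𝒯.xi (𝒯.map (fun p => b.rel p.1 (f p.2)) 𝔴.1)) (ψ (𝒯.map Prod.snd 𝔴.1)) := by
  apply le_antisymm
  · refine iSup_le ?_
    rintro ⟨𝔛, rfl⟩
    refine iSup_le fun 𝔵 => ?_
    rw [Txi, iSup_tens]
    refine iSup_le ?_
    rintro ⟨𝔴, h𝔴, rfl⟩
    exact le_iSup_of_le ⟨𝔴, congrArg 𝒯.m h𝔴⟩ le_rfl
  · refine iSup_le fun ⟨𝔴, h𝔴⟩ => ?_
    refine le_iSup_of_le ⟨𝒯.map Prod.fst 𝔴, h𝔴⟩ (le_iSup_of_le (𝒯.map Prod.snd 𝔴) ?_)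
    exact tens_mono_left (xi_map_le_Txi (modCostar b f) Prod.fst Prod.snd 𝔴) _

lemma tens_xi_le_hatMapRel {X Y : Type u} (b : 𝒯.TCatStr Y) (f : X → Y) (ψ : T X → V)
    (𝔴 : T (T Y × X)) :
    𝒯.tens (𝒯.xi (𝒯.map (fun p => b.rel p.1 (f p.2)) 𝔴)) (ψ (𝒯.map Prod.snd 𝔴)) ≤
      hatMapRel b f ψ (𝒯.m (𝒯.map Prod.fst 𝔴)) := by
  rw [hatMapRel_eq]
  exact le_iSup_of_le ⟨𝔴, rfl⟩ le_rfl

lemma le_hatMapRel_map {X Y : Type u} (b : 𝒯.TCatStr Y) (f : X → Y) (ψ : T X → V)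
    (𝔵 : T X) : ψ 𝔵 ≤ hatMapRel b f ψ (𝒯.map f 𝔵) := by
  set 𝔴 := 𝒯.map (fun x => (𝒯.e (f x), x)) 𝔵
  have h1 : 𝒯.m (𝒯.map Prod.fst 𝔴) = 𝒯.map f 𝔵 := by rw [map_map, ← map_map f 𝒯.e, 𝒯.m_map_e]
  have h2 : 𝒯.map Prod.snd 𝔴 = 𝔵 := (map_map _ _ _).trans (map_id_apply 𝔵)
  have h := tens_xi_le_hatMapRel b f ψ 𝔴
  rw [h1, h2, map_map] at h
  calc ψ 𝔵 = 𝒯.tens 𝒯.unit (ψ 𝔵) := (𝒯.unit_tens _).symm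
    _ ≤ _ := (tens_mono_left (unit_le_xi_map (fun x => b.le_refl (f x)) 𝔵) _).trans h

lemma hatMapRel_comap_le {X Y : Type u} {b : 𝒯.TCatStr Y} (f : X → Y) {ψ : T Y → V}
    (hψ : IsPresheaf b ψ) (𝔶 : T Y) :
    hatMapRel b f (fun 𝔵 => ψ (𝒯.map f 𝔵)) 𝔶 ≤ ψ 𝔶 := by
  refine (kleisli_le_iff (γ := fun 𝔶 (_ : PUnit.{u + 1}) => ψ 𝔶)).mpr (fun 𝔛 𝔵 _ => ?_) 𝔶
    PUnit.unit
  refine (tens_mono_left (Txi_le_Txi_map (r' := b.rel) id f (fun _ _ => le_rfl) 𝔛 𝔵) _).trans ?_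
  simpa only [map_id_apply] using (isPresheaf_iff.mp hψ).1 𝔛 (𝒯.map f 𝔵)

/-- Naturality of `ξ` lifts the pointwise bound `k ≤ ⋁ᵢ φ(i, y)` to `T`-elements `𝔶`. -/
lemma le_of_forall_tens_xi_le {I Y : Type u} {φ : I → Y → V}
    (hφ : ∀ y, 𝒯.unit ≤ ⨆ i, φ i y) (𝔶 : T Y) {v w : V}
    (h : ∀ 𝔯 : T (I × Y), 𝒯.map Prod.snd 𝔯 = 𝔶 →
      𝒯.tens (𝒯.xi (𝒯.map (fun p => φ p.1 p.2) 𝔯)) v ≤ w) : v ≤ w :=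
  calc v = 𝒯.tens 𝒯.unit v := (𝒯.unit_tens v).symm
    _ ≤ 𝒯.tens (𝒯.xi (𝒯.map (fun y => ⨆ i, φ i y) 𝔶)) v := tens_mono_left (unit_le_xi_map hφ 𝔶) v
    _ ≤ 𝒯.tens (⨆ 𝔯 : {𝔯 : T (I × Y) // 𝒯.map Prod.snd 𝔯 = 𝔶},
          𝒯.xi (𝒯.map (fun p => φ p.1 p.2) 𝔯.1)) v :=
      tens_mono_left (xi_map_le_iSup_fiber (𝒯 := 𝒯) (F := fun p : I × Y => φ p.1 p.2) Prod.snd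
        (fun y => iSup_le fun i => le_iSup_of_le ⟨(i, y), rfl⟩ le_rfl) 𝔶) v
    _ ≤ w := by
      rw [iSup_tens]
      exact iSup_le fun 𝔯 => h 𝔯.1 𝔯.2

lemma IsAdjunction.dense {A B : Type u} {as : 𝒯.TCatStr A} {bs : 𝒯.TCatStr B} {u : A → B}
    {v : B → A} (hadj : IsAdjunction as bs u v) : Dense bs u := by
  refine le_iInf fun y => le_iSup_of_le (𝒯.e (v y)) ?_
  simpa only [modStar, 𝒯.e_nat] using (bs.le_refl (u (v y))).trans (hadj.2 _ y)

lemma IsLeftAdjoint.dense {A B : Type u} {as : 𝒯.TCatStr A} {bs : 𝒯.TCatStr B} {u : A → B}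
    (h : IsLeftAdjoint as bs u) : Dense bs u := by
  obtain ⟨-, _, -, hadj⟩ := h
  exact hadj.dense

lemma Dense.unit_le_iSup_comap {X Y : Type u} {b : 𝒯.TCatStr Y} {f : X → Y} (hd : Dense b f)
    {ψ : T Y → V} (hψ : IsPresheaf b ψ) (hinh : 𝒯.unit ≤ ⨆ 𝔶, ψ 𝔶) :
    𝒯.unit ≤ ⨆ 𝔵, ψ (𝒯.map f 𝔵) := by
  refine hinh.trans (iSup_le fun 𝔶 => le_of_forall_tens_xi_le
    (φ := fun 𝔵 y => b.rel (𝒯.map f 𝔵) y) (fun y => hd.trans (iInf_le _ y)) 𝔶 fun 𝔯 h𝔯 => ?_)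
  have h := xi_map_le_Txi (𝒯 := 𝒯) b.rel (fun p => 𝒯.map f p.1) Prod.snd 𝔯
  rw [h𝔯] at h
  refine (tens_mono_left h _).trans (((isPresheaf_iff.mp hψ).1 _ _).trans ?_)
  rw [← map_map Prod.fst (𝒯.map f), ← 𝒯.m_nat]
  exact le_iSup (fun 𝔵 => ψ (𝒯.map f 𝔵)) _

lemma tens_powRel_le {R X : Type u} (u : R → T X) (w : R → (T X → V)) {𝔯 : T R}
    {𝔭 : T (T X → V)} (hw : 𝒯.map w 𝔯 = 𝔭) (ψ : T X → V) :
    𝒯.tens (𝒯.xi (𝒯.map (fun r => w r (u r)) 𝔯)) (𝒯.powRel X 𝔭 ψ) ≤ ψ (𝒯.m (𝒯.map u 𝔯)) := by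
  refine tens_le_iff_le_ihom.mpr ((iInf_le _ ⟨𝒯.map (fun r => (u r, w r)) 𝔯,
    by rw [map_map, ← hw]⟩).trans_eq ?_)
  simp only [map_map]

lemma powRel_mono {X : Type u} (𝔭 : T (T X → V)) {ψ ψ' : T X → V} (h : ∀ 𝔵, ψ 𝔵 ≤ ψ' 𝔵) :
    𝒯.powRel X 𝔭 ψ ≤ 𝒯.powRel X 𝔭 ψ' :=
  iInf_mono fun _ => ihom_mono _ (h _)

lemma powRel_le_powRel_comap {X Y : Type u} (f : X → Y) (𝔭 : T (T Y → V)) (χ : T Y → V) :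
    𝒯.powRel Y 𝔭 χ ≤
      𝒯.powRel X (𝒯.map (fun ρ 𝔵 => ρ (𝒯.map f 𝔵)) 𝔭) (fun 𝔵 => χ (𝒯.map f 𝔵)) := by
  refine le_iInf fun ⟨𝔮, h𝔮⟩ => tens_le_iff_le_ihom.mp ?_
  obtain ⟨𝔰, h𝔰, rfl⟩ := exists_map_snd_eq 𝔮 _ 𝔭 h𝔮
  simpa only [map_map, 𝒯.m_nat] using tens_powRel_le (fun s => 𝒯.map f s.1) Prod.snd h𝔰 χ

lemma powRel_le_iSup_map {X Y A : Type u} (f : X → Y) (va : A → (T Y → V))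
    (hva : ∀ q, 𝒯.unit ≤ ⨆ 𝔵, va q (𝒯.map f 𝔵)) (𝔭 : T A) (χ : T Y → V) :
    𝒯.powRel Y (𝒯.map va 𝔭) χ ≤ ⨆ 𝔵, χ (𝒯.map f 𝔵) := by
  refine le_of_forall_tens_xi_le (φ := fun 𝔵 q => va q (𝒯.map f 𝔵)) hva 𝔭 fun 𝔯 h𝔯 => ?_
  refine (tens_powRel_le (fun p : T X × A => 𝒯.map f p.1) (fun p => va p.2)
    (by rw [← h𝔯, map_map]) χ).trans ?_
  rw [← map_map Prod.fst (𝒯.map f), ← 𝒯.m_nat]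
  exact le_iSup (fun 𝔵 => χ (𝒯.map f 𝔵)) _

/-- Expand each `f̂ (va q)` by `hatMapRel_eq`, pull the supremum out of `ξ` by naturality, and
split the result with `xi_tens` and `xi_m` into a `b`-factor and a `va`-factor; the latter is
absorbed by the `powRel` on the left. -/
lemma powRel_le_powRel_hatMapRel {X Y A : Type u} (b : 𝒯.TCatStr Y) (f : X → Y)
    (va : A → (T X → V)) (χ : T X → V) (𝔭 : T A) :
    𝒯.powRel X (𝒯.map va 𝔭) χ ≤
      𝒯.powRel Y (𝒯.map (fun q => hatMapRel b f (va q)) 𝔭) (hatMapRel b f χ) := by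
  refine le_iInf fun ⟨𝔮, h𝔮⟩ => tens_le_iff_le_ihom.mp ?_
  obtain ⟨𝔰, h𝔰, rfl⟩ := exists_map_snd_eq 𝔮 _ 𝔭 h𝔮
  simp only [map_map]
  let g : T (T Y × X) × A → T Y × A := fun x => (𝒯.m (𝒯.map Prod.fst x.1), x.2)
  let F : T (T Y × X) × A → V := fun x =>
    𝒯.tens (𝒯.xi (𝒯.map (fun p => b.rel p.1 (f p.2)) x.1)) (va x.2 (𝒯.map Prod.snd x.1))
  have hpt : ∀ s : T Y × A, hatMapRel b f (va s.2) s.1 ≤ ⨆ x : {x // g x = s}, F x.1 := by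
    rintro ⟨𝔶, q⟩
    rw [hatMapRel_eq]
    exact iSup_le fun ⟨𝔴, h𝔴⟩ => le_iSup_of_le ⟨(𝔴, q), by simp only [g, h𝔴]⟩ le_rfl
  refine (tens_mono_left (xi_map_le_iSup_fiber g hpt 𝔰) _).trans ?_
  rw [iSup_tens]
  refine iSup_le fun ⟨𝔱, h𝔱⟩ => ?_
  rw [xi_map_tens, xi_map_xi_map _ Prod.fst, 𝒯.tens_assoc]
  have hva : 𝒯.map (fun x => va x.2) 𝔱 = 𝒯.map va 𝔭 := by
    rw [← h𝔰, ← h𝔱, map_map, map_map]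
  refine (tens_mono_right (tens_powRel_le (fun x => 𝒯.map Prod.snd x.1) _ hva χ) _).trans ?_
  have h1 : 𝒯.m (𝒯.map (fun x => 𝒯.map Prod.snd x.1) 𝔱) =
      𝒯.map Prod.snd (𝒯.m (𝒯.map Prod.fst 𝔱)) := by rw [𝒯.m_nat, map_map]
  have h2 : 𝒯.m (𝒯.map Prod.fst 𝔰) = 𝒯.m (𝒯.map Prod.fst (𝒯.m (𝒯.map Prod.fst 𝔱))) := by
    rw [← h𝔱, 𝒯.m_nat, 𝒯.m_assoc, map_map, map_map, map_map]
  rw [h1, h2]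
  exact tens_xi_le_hatMapRel b f χ _

lemma IsPlusStr.rel_eq {X : Type u} {a : 𝒯.TCatStr X} {hs : 𝒯.TCatStr (Hat a)}
    {ps : 𝒯.TCatStr (Plus a)} (hps : IsPlusStr a hs ps) (hhs : IsHatStr a hs)
    (𝔭 : T (Plus a)) (φ : Plus a) :
    ps.rel 𝔭 φ = 𝒯.powRel X (𝒯.map (fun q : Plus a => q.1.1) 𝔭) φ.1.1 := by
  rw [hps, hhs]
  exact congrArg (𝒯.powRel X · φ.1.1) (map_map _ _ _)

lemma Plus.unit_le_iSup {X : Type u} {a : 𝒯.TCatStr X} (ψ : Plus a) :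
    𝒯.unit ≤ ⨆ 𝔵, ψ.1.1 𝔵 :=
  ψ.2.trans (iInf_le _ PUnit.unit)

/-- The restriction of `f⁻¹ : Ŷ → X̂` to `Y⁺ → X⁺`. -/
def plusComap {X Y : Type u} {a : 𝒯.TCatStr X} {b : 𝒯.TCatStr Y} {f : X → Y}
    (hf : IsTFunctor a b f) (hd : Dense b f) (ψ : Plus b) : Plus a :=
  ⟨⟨fun 𝔵 => ψ.1.1 (𝒯.map f 𝔵), isPresheaf_comap hf ψ.1.2⟩,
    le_iInf fun _ => hd.unit_le_iSup_comap ψ.1.2 ψ.unit_le_iSup⟩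

def plusYoneda {Y : Type u} (b : 𝒯.TCatStr Y) (y : Y) : Plus b :=
  ⟨⟨fun 𝔶 => b.rel 𝔶 y, isPresheaf_rel b y⟩,
    le_iInf fun _ => (b.le_refl y).trans (le_iSup (fun 𝔶 => b.rel 𝔶 y) (𝒯.e y))⟩

section PlusMap

variable {X Y : Type u} {a : 𝒯.TCatStr X} {b : 𝒯.TCatStr Y} {f : X → Y}
  {hsa : 𝒯.TCatStr (Hat a)} {hsb : 𝒯.TCatStr (Hat b)}
  {psa : 𝒯.TCatStr (Plus a)} {psb : 𝒯.TCatStr (Plus b)} {fp : Plus a → Plus b}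

lemma isTFunctor_plusMap (hhsa : IsHatStr a hsa) (hpsa : IsPlusStr a hsa psa)
    (hhsb : IsHatStr b hsb) (hpsb : IsPlusStr b hsb psb)
    (hfp : ∀ ψ, (fp ψ).1.1 = hatMapRel b f ψ.1.1) : IsTFunctor psa psb fp := by
  intro 𝔭 φ
  simp only [hpsa.rel_eq hhsa, hpsb.rel_eq hhsb, map_map, hfp]
  exact powRel_le_powRel_hatMapRel b f (fun q : Plus a => q.1.1) φ.1.1 𝔭

lemma Dense.isLeftAdjoint_plusMap (hd : Dense b f) (hf : IsTFunctor a b f)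
    (hhsa : IsHatStr a hsa) (hpsa : IsPlusStr a hsa psa)
    (hhsb : IsHatStr b hsb) (hpsb : IsPlusStr b hsb psb)
    (hfp : ∀ ψ, (fp ψ).1.1 = hatMapRel b f ψ.1.1) : IsLeftAdjoint psa psb fp := by
  refine ⟨isTFunctor_plusMap hhsa hpsa hhsb hpsb hfp, plusComap hf hd,
    fun 𝔮 ψ => ?_, fun 𝔭 φ => ?_, fun 𝔮 ψ => ?_⟩
  · rw [hpsb.rel_eq hhsb, hpsa.rel_eq hhsa, map_map]
    exact (powRel_le_powRel_comap f _ ψ.1.1).trans_eq (by rw [map_map]; rfl)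
  · simp only [hpsa.rel_eq hhsa]
    exact powRel_mono _ fun 𝔵 =>
      (le_hatMapRel_map b f φ.1.1 𝔵).trans_eq (congrFun (hfp φ) _).symm
  · simp only [hpsb.rel_eq hhsb]
    exact powRel_mono _ fun 𝔶 => (congrFun (hfp _) 𝔶).trans_le (hatMapRel_comap_le f ψ.1.2 𝔶)

lemma Dense.of_dense_plusMap (hhsb : IsHatStr b hsb) (hpsb : IsPlusStr b hsb psb)
    (hfp : ∀ ψ, (fp ψ).1.1 = hatMapRel b f ψ.1.1) (h : Dense psb fp) : Dense b f := by
  refine le_iInf fun y => (h.trans (iInf_le _ (plusYoneda b y))).trans (iSup_le fun 𝔭 => ?_)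
  rw [modStar, hpsb.rel_eq hhsb, map_map]
  refine powRel_le_iSup_map f _ (fun q => ?_) 𝔭 _
  rw [hfp]
  exact q.unit_le_iSup.trans (iSup_mono fun 𝔵 => le_hatMapRel_map b f q.1.1 𝔵)

end PlusMap

lemma IsColimit.rel_le_rel_comp {X Y : Type u} {a : 𝒯.TCatStr X} {b : 𝒯.TCatStr Y}
    {f : X → Y} {g : Y → X} (hg : IsColimit a id (modStar b f) g) (𝔵 : T X) (x : X) :
    a.rel 𝔵 x ≤ a.rel 𝔵 (g (f x)) := by
  refine a.rel_le_rel_of_unit_le ?_ 𝔵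
  have hext : 𝒯.unit ≤ 𝒯.extend (modStar a id) (modStar b f) (𝒯.e (f x)) (g (f x)) := by
    rw [← hg]
    simpa only [modStar, 𝒯.e_nat] using a.le_refl (g (f x))
  have hTxi : 𝒯.unit ≤ 𝒯.Txi (modStar b f) (𝒯.e (𝒯.e x)) (𝒯.e (f x)) := by
    refine (b.le_refl (f x)).trans ?_
    simpa only [modStar, 𝒯.e_nat] using le_Txi_e (modStar b f) (𝒯.e x) (f x)
  have h := tens_extend_le (𝒯 := 𝒯) (modStar a id) (modStar b f) (𝒯.e (𝒯.e x)) (𝒯.e (f x)) (g (f x))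
  simp only [modStar, map_id_apply, 𝒯.m_e] at h
  calc 𝒯.unit = 𝒯.tens 𝒯.unit 𝒯.unit := (tens_unit _).symm
    _ ≤ _ := (tens_mono_left hTxi _).trans (tens_mono_right hext _)
    _ ≤ a.rel (𝒯.e x) (g (f x)) := h

lemma IsColimit.rel_le_rel_of_modStar_self {X Y : Type u} {b : 𝒯.TCatStr Y} {f : X → Y}
    {k : Y → Y} (hk : IsColimit b f (modStar b f) k) (𝔶 : T Y) (y : Y) :
    b.rel 𝔶 (k y) ≤ b.rel 𝔶 y := by
  refine b.rel_le_rel_of_unit_le ?_ 𝔶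
  have h := unit_le_extend_self b (kleisli_rel_modStar_le b f) y
  rw [← hk] at h
  simpa only [modStar, 𝒯.e_nat] using h

lemma Dense.isLeftAdjoint {X Y : Type u} {a : 𝒯.TCatStr X} {b : 𝒯.TCatStr Y} {f : X → Y}
    (hd : Dense b f) (hf : IsTFunctor a b f) (hXc : ICocomplete a)
    (hcont : ICocontinuous a b f) : IsLeftAdjoint a b f := by
  have hid : IsTFunctor a a id := fun 𝔵 x => (congrArg (a.rel · x) (map_id_apply 𝔵)).ge
  have hmod : 𝒯.IsTModRel a.rel b.rel (modStar b f) :=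
    ⟨kleisli_modStar_le hf, kleisli_rel_modStar_le b f⟩
  obtain ⟨g, hg, hcolim⟩ := hXc X Y a b id hid (modStar b f) hmod hd
  exact ⟨hf, g, hg, hcolim.rel_le_rel_comp,
    (hcont X Y a b id _ g hid hmod hd hg hcolim).rel_le_rel_of_modStar_self⟩

/-- Proposition 5.6. For a `𝒯`-functor `f : X → Y` the following
are equivalent: (i) `f` is dense; (ii) `f⁺ : X⁺ → Y⁺` is left adjoint; (iii) `f⁺` is
dense. If moreover `X` and `Y` are inhabited-cocomplete and `f` is
inhabited-cocontinuous, these are also equivalent to: (iv) `f` is left adjoint. -/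
theorem statement19 (𝒯 : TopTheory V T) {X Y : Type u}
    (a : 𝒯.TCatStr X) (b : 𝒯.TCatStr Y)
    (hsa : 𝒯.TCatStr (Hat a)) (hhsa : IsHatStr a hsa)
    (hsb : 𝒯.TCatStr (Hat b)) (hhsb : IsHatStr b hsb)
    (psa : 𝒯.TCatStr (Plus a)) (hpsa : IsPlusStr a hsa psa)
    (psb : 𝒯.TCatStr (Plus b)) (hpsb : IsPlusStr b hsb psb)
    (f : X → Y) (hf : IsTFunctor a b f)
    (fh : Hat a → Hat b) (hfh : IsHatMap a b f fh)
    (fp : Plus a → Plus b) (hfp : ∀ ψ : Plus a, (fp ψ).1 = fh ψ.1) :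
    ((Dense b f ↔ IsLeftAdjoint psa psb fp) ∧ (Dense b f ↔ Dense psb fp)) ∧
    (ICocomplete a → ICocomplete b → ICocontinuous a b f →
      (Dense b f ↔ IsLeftAdjoint a b f)) := by
  have hfp' : ∀ ψ : Plus a, (fp ψ).1.1 = hatMapRel b f ψ.1.1 :=
    fun ψ => funext fun 𝔶 => by rw [hfp, hfh]
  have h12 : Dense b f → IsLeftAdjoint psa psb fp :=
    fun hd => hd.isLeftAdjoint_plusMap hf hhsa hpsa hhsb hpsb hfp'
  have h23 : IsLeftAdjoint psa psb fp → Dense psb fp := IsLeftAdjoint.dense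
  have h31 : Dense psb fp → Dense b f := Dense.of_dense_plusMap hhsb hpsb hfp'
  exact ⟨⟨⟨h12, h31 ∘ h23⟩, ⟨h23 ∘ h12, h31⟩⟩,
    fun hXc _ hcont => ⟨fun hd => hd.isLeftAdjoint hf hXc hcont, IsLeftAdjoint.dense⟩⟩

end TopTheory

end Paper
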